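/- In the automaton group of automaton 882, the element g = acacbc satisfies, for all n ≥ 1: g^{2^n}(0^{2n+1}) = 0^{2n+1} and g^{2^n}|_{0^{2n+1}} = cacb. Consequently g^{2^n}(0^∞) = 0^{2n+1}·1·1·0^∞ for all n ≥ 1, and g has infinite order. -/

import Mathlib

/-!
Write `g = acacbc` and `h = cacb`. By the self-similar recursion and `b² = 1`, `g` fixes the
letter `0` with restriction `h` there, and `h²` fixes `00` with restriction `h` again. Hence
`h^(2k)(00w) = 00 h^k(w)`, so `h^(2^n)(0^(2n) w) = 0^(2n) h(w)` and `g^(2^n)` acts on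
`0^(2n+1) w` as claimed; with `h(0^∞) = 110^∞` this gives the image of `0^∞`. Finally `g`
has infinite order because `h^m(0^∞) ≠ 0^∞` for `m ≠ 0`: an even exponent halves, and an odd
one changes the first letter.
-/

namespace Stmt9


/-- A Mealy automaton over the binary alphabet with state set `S`. -/
structure Mealy (S : Type) where
  /-- transition function -/
  δ : S → Bool → S
  /-- output function -/
  τ : S → Bool → Bool

namespace Mealy

variable {S : Type} (M : Mealy S)

/-- The state reached from `q` after reading the first `n` letters of `w`. -/
def stateAt (q : S) (w : ℕ → Bool) : ℕ → S
  | 0 => q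
  | n + 1 => M.δ (stateAt q w n) (w n)

/-- The action of state `q` on infinite words. -/
def act (q : S) (w : ℕ → Bool) : ℕ → Bool :=
  fun n => M.τ (M.stateAt q w n) (w n)

/-- The inverse automaton (for automata whose output functions are involutions). -/
def inv : Mealy S := ⟨fun q b => M.δ q (M.τ q b), M.τ⟩

theorem stateAt_inv_act (h : ∀ q b, M.τ q (M.τ q b) = b) (q : S) (w : ℕ → Bool) :
    ∀ n, M.inv.stateAt q (M.act q w) n = M.stateAt q w n := by
  intro n
  induction n with
  | zero => rfl
  | succ n ih =>
    show M.inv.δ (M.inv.stateAt q (M.act q w) n) (M.act q w n) = M.δ (M.stateAt q w n) (w n)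
    rw [ih]
    show M.δ (M.stateAt q w n) (M.τ (M.stateAt q w n) (M.τ (M.stateAt q w n) (w n))) = _
    rw [h]

theorem inv_act (h : ∀ q b, M.τ q (M.τ q b) = b) (q : S) (w : ℕ → Bool) :
    M.inv.act q (M.act q w) = w := by
  funext n
  show M.inv.τ (M.inv.stateAt q (M.act q w) n) (M.act q w n) = w n
  rw [stateAt_inv_act M h]
  show M.τ (M.stateAt q w n) (M.τ (M.stateAt q w n) (w n)) = w n
  rw [h]

theorem inv_inv (h : ∀ q b, M.τ q (M.τ q b) = b) : M.inv.inv = M := by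
  obtain ⟨d, t⟩ := M
  simp only [inv]
  congr 1
  funext q b
  exact congrArg (d q) (h q b)

/-- The permutation of the set of infinite binary words defined by state `q`. -/
def perm (h : ∀ q b, M.τ q (M.τ q b) = b) (q : S) : Equiv.Perm (ℕ → Bool) where
  toFun := M.act q
  invFun := M.inv.act q
  left_inv := fun w => M.inv_act h q w
  right_inv := fun w => by
    have h2 : ∀ q b, M.inv.τ q (M.inv.τ q b) = b := h
    have := M.inv.inv_act h2 q w
    rwa [M.inv_inv h] at this

end Mealy

/-- Prepend a finite word to an infinite word. -/
def cat (u : List Bool) (w : ℕ → Bool) : ℕ → Bool :=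
  fun n => u.getD n (w (n - u.length))

/-- The (semantic) restriction of a transformation of infinite words to the
subtree indexed by the finite word `u`. -/
def resW (f : (ℕ → Bool) → ℕ → Bool) (u : List Bool) : (ℕ → Bool) → ℕ → Bool :=
  fun w n => f (cat u w) (n + u.length)

/-- The periodic infinite word with period `u`. -/
def per (u : List Bool) : ℕ → Bool := fun n => u.getD (n % u.length) false

/-- Left-shift equivalence of infinite words: they share a common infinite tail. -/
def seq (u v : ℕ → Bool) : Prop := ∃ k l : ℕ, ∀ n, u (n + k) = v (n + l)

inductive St : Type
  | a | b | c
deriving DecidableEq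

instance : Fintype St := ⟨{St.a, St.b, St.c}, fun x => by cases x <;> simp⟩

/-- Automaton 882. -/
def M : Mealy St where
  δ := fun q x => match q, x with
    | .a, false => .c | .a, true => .c
    | .b, false => .b | .b, true => .c
    | .c, false => .b | .c, true => .a
  τ := fun q x => match q with
    | .a => !x
    | .b => x
    | .c => x

theorem M_inv : ∀ q x, M.τ q (M.τ q x) = x := by decide

/-- The automorphism of the binary tree boundary defined by state `a`. -/
def a : Equiv.Perm (ℕ → Bool) := M.perm M_inv .a

/-- The automorphism of the binary tree boundary defined by state `b`. -/
def b : Equiv.Perm (ℕ → Bool) := M.perm M_inv .b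

/-- The automorphism of the binary tree boundary defined by state `c`. -/
def c : Equiv.Perm (ℕ → Bool) := M.perm M_inv .c

def cons (x : Bool) (w : ℕ → Bool) : ℕ → Bool
  | 0 => x
  | n + 1 => w n

theorem cons_injective (x : Bool) : Function.Injective (cons x) :=
  fun _ _ h => funext fun n => congrFun h (n + 1)

theorem const_eq_cons (x : Bool) : (fun _ => x : ℕ → Bool) = cons x fun _ => x := by
  funext n; cases n <;> rfl

namespace Mealy

variable {S : Type} (M : Mealy S)

theorem stateAt_cons_succ (q : S) (x : Bool) (w : ℕ → Bool) (n : ℕ) :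
    M.stateAt q (cons x w) (n + 1) = M.stateAt (M.δ q x) w n := by
  induction n with
  | zero => rfl
  | succ n ih => exact congrArg (M.δ · (w n)) ih

theorem act_cons (q : S) (x : Bool) (w : ℕ → Bool) :
    M.act q (cons x w) = cons (M.τ q x) (M.act (M.δ q x) w) := by
  funext n
  cases n with
  | zero => rfl
  | succ n => exact congrArg (M.τ · (w n)) (M.stateAt_cons_succ q x w n)

theorem stateAt_const_of_fixed {q : S} {x : Bool} (hq : M.δ q x = q) (n : ℕ) :
    M.stateAt q (fun _ => x) n = q := by
  induction n with
  | zero => rfl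
  | succ n ih => exact (congrArg (M.δ · x) ih).trans hq

theorem act_const_of_fixed {q : S} {x : Bool} (hq : M.δ q x = q) (hx : M.τ q x = x) :
    M.act q (fun _ => x) = fun _ => x :=
  funext fun n => (congrArg (M.τ · x) (M.stateAt_const_of_fixed hq n)).trans hx

theorem act_act_of_inv_eq_self (h : ∀ q b, M.τ q (M.τ q b) = b) (hM : M.inv = M) (q : S)
    (w : ℕ → Bool) : M.act q (M.act q w) = w := by
  simpa only [hM] using M.inv_act h q w

end Mealy

theorem cat_nil (w : ℕ → Bool) : cat [] w = w := rfl

theorem cat_cons (x : Bool) (u : List Bool) (w : ℕ → Bool) :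
    cat (x :: u) w = cons x (cat u w) := by
  funext n
  cases n with
  | zero => rfl
  | succ n => simp [cat, cons]

theorem cat_append (u v : List Bool) (w : ℕ → Bool) : cat (u ++ v) w = cat u (cat v w) := by
  induction u with
  | nil => rfl
  | cons x u ih => simp only [List.cons_append, cat_cons, ih]

theorem cat_replicate_const (x : Bool) (k : ℕ) :
    cat (List.replicate k x) (fun _ => x) = fun _ => x := by
  induction k with
  | zero => rfl
  | succ k ih => rw [List.replicate_succ, cat_cons, ih, ← const_eq_cons]

theorem M_inv_eq_self : M.inv = M := by
  show Mealy.mk _ _ = Mealy.mk _ _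
  congr 1
  funext q x
  cases q <;> cases x <;> rfl

theorem b_involutive : Function.Involutive b :=
  M.act_act_of_inv_eq_self M_inv M_inv_eq_self .b

theorem a_cons (x : Bool) (w : ℕ → Bool) : a (cons x w) = cons (!x) (c w) := by
  cases x <;> exact M.act_cons .a _ w

theorem b_cons_false (w : ℕ → Bool) : b (cons false w) = cons false (b w) := M.act_cons .b _ w
theorem b_cons_true (w : ℕ → Bool) : b (cons true w) = cons true (c w) := M.act_cons .b _ w
theorem c_cons_false (w : ℕ → Bool) : c (cons false w) = cons false (b w) := M.act_cons .c _ w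
theorem c_cons_true (w : ℕ → Bool) : c (cons true w) = cons true (a w) := M.act_cons .c _ w

theorem b_const_false : b (fun _ => false) = fun _ => false :=
  M.act_const_of_fixed (q := .b) rfl rfl

theorem c_const_false : c (fun _ => false) = fun _ => false := by
  rw [const_eq_cons, c_cons_false, b_const_false]

theorem a_const_false : a (fun _ => false) = cons true fun _ => false := by
  conv_lhs => rw [const_eq_cons]
  rw [a_cons, c_const_false, Bool.not_false]

theorem cacb_cons_false (w : ℕ → Bool) :
    (c * a * c * b) (cons false w) = cons true (a (c w)) := by
  simp only [Equiv.Perm.mul_apply, b_cons_false, c_cons_false, b_involutive w, a_cons,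
    c_cons_true, Bool.not_false]

theorem cacb_cons_true (w : ℕ → Bool) :
    (c * a * c * b) (cons true w) = cons false (b (c (a (c w)))) := by
  simp only [Equiv.Perm.mul_apply, b_cons_true, c_cons_true, a_cons, c_cons_false, Bool.not_true]

theorem cacb_sq_cons_false_cons_false (w : ℕ → Bool) :
    ((c * a * c * b) ^ 2) (cons false (cons false w)) =
      cons false (cons false ((c * a * c * b) w)) := by
  rw [sq, Equiv.Perm.mul_apply, cacb_cons_false, cacb_cons_true]
  simp only [Equiv.Perm.mul_apply, c_cons_false, a_cons, c_cons_true, b_cons_false,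
    b_involutive _, Bool.not_false, Bool.not_true]

theorem cacb_pow_two_mul_cons_false_cons_false (k : ℕ) (w : ℕ → Bool) :
    ((c * a * c * b) ^ (2 * k)) (cons false (cons false w)) =
      cons false (cons false (((c * a * c * b) ^ k) w)) := by
  induction k generalizing w with
  | zero => rfl
  | succ k ih =>
    rw [mul_add_one, pow_add, Equiv.Perm.mul_apply, cacb_sq_cons_false_cons_false, ih,
      ← Equiv.Perm.mul_apply, ← pow_succ]

theorem cacb_pow_two_pow (n : ℕ) (w : ℕ → Bool) :
    ((c * a * c * b) ^ 2 ^ n) (cat (List.replicate (2 * n) false) w) =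
      cat (List.replicate (2 * n) false) ((c * a * c * b) w) := by
  induction n generalizing w with
  | zero => rfl
  | succ n ih =>
    have split (v : ℕ → Bool) :
        cat (List.replicate (2 * (n + 1)) false) v =
          cons false (cons false (cat (List.replicate (2 * n) false) v)) := by
      rw [mul_add_one, add_comm, List.replicate_add, cat_append]
      exact (cat_cons _ _ _).trans (congrArg _ (cat_cons _ _ _))
    rw [split, split, pow_succ', cacb_pow_two_mul_cons_false_cons_false, ih]

theorem cacb_const_false :
    (c * a * c * b) (fun _ => false) = cons true (cons true fun _ => false) := by
  conv_lhs => rw [const_eq_cons]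
  rw [cacb_cons_false, c_const_false, a_const_false]

theorem cacb_pow_two_mul_const_false (k : ℕ) :
    ((c * a * c * b) ^ (2 * k)) (fun _ => false) =
      cons false (cons false (((c * a * c * b) ^ k) fun _ => false)) := by
  conv_lhs => rw [const_eq_cons, const_eq_cons]
  exact cacb_pow_two_mul_cons_false_cons_false k _

theorem cacb_pow_const_false_ne {m : ℕ} (hm : m ≠ 0) :
    ((c * a * c * b) ^ m) (fun _ => false) ≠ fun _ => false := by
  induction m using Nat.evenOddRec with
  | h0 => exact (hm rfl).elim
  | h_even n ih =>
    intro heq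
    rw [cacb_pow_two_mul_const_false] at heq
    conv_rhs at heq => rw [const_eq_cons, const_eq_cons]
    exact ih (right_ne_zero_of_mul hm) (cons_injective _ (cons_injective _ heq))
  | h_odd n _ =>
    rw [pow_succ', Equiv.Perm.mul_apply, cacb_pow_two_mul_const_false, cacb_cons_false]
    exact fun heq => absurd (congrFun heq 0) Bool.true_eq_false.mp

theorem acacbc_cons_false (w : ℕ → Bool) :
    (a * c * a * c * b * c) (cons false w) = cons false ((c * a * c * b) w) := by
  simp only [Equiv.Perm.mul_apply, c_cons_false, b_cons_false, b_involutive w, a_cons,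
    c_cons_true, Bool.not_false, Bool.not_true]

theorem acacbc_pow_cons_false (k : ℕ) (w : ℕ → Bool) :
    ((a * c * a * c * b * c) ^ k) (cons false w) = cons false (((c * a * c * b) ^ k) w) := by
  induction k with
  | zero => rfl
  | succ k ih =>
    rw [pow_succ', Equiv.Perm.mul_apply, ih, acacbc_cons_false, ← Equiv.Perm.mul_apply, ← pow_succ']

theorem acacbc_pow_two_pow (n : ℕ) (w : ℕ → Bool) :
    ((a * c * a * c * b * c) ^ 2 ^ n) (cat (List.replicate (2 * n + 1) false) w) =
      cat (List.replicate (2 * n + 1) false) ((c * a * c * b) w) := by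
  rw [List.replicate_succ, cat_cons, cat_cons, acacbc_pow_cons_false, cacb_pow_two_pow]

/-- In the automaton group of automaton 882, for `g = acacbc` and all `n ≥ 1`:
`g^(2^n)` fixes `0^(2n+1)` with restriction `cacb` there, so
`g^(2^n)(0^∞) = 0^(2n+1) 1 1 0^∞`; hence `g` has infinite order. -/
theorem automaton882_acacbc :
    (∀ n : ℕ, 1 ≤ n →
      (∀ w : ℕ → Bool,
        ((a * c * a * c * b * c) ^ 2 ^ n) (cat (List.replicate (2 * n + 1) false) w) =
          cat (List.replicate (2 * n + 1) false) ((c * a * c * b) w)) ∧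
      ((a * c * a * c * b * c) ^ 2 ^ n) (fun _ => false) =
        cat (List.replicate (2 * n + 1) false ++ [true, true]) (fun _ => false)) ∧
    (∀ n : ℕ, 1 ≤ n → (a * c * a * c * b * c) ^ n ≠ 1) := by
  refine ⟨fun n _ => ⟨acacbc_pow_two_pow n, ?_⟩, fun n hn hg => ?_⟩
  · conv_lhs => rw [← cat_replicate_const false (2 * n + 1)]
    rw [acacbc_pow_two_pow, cacb_const_false, cat_append, cat_cons, cat_cons, cat_nil]
  · apply cacb_pow_const_false_ne (Nat.one_le_iff_ne_zero.mp hn)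
    apply cons_injective false
    rw [← acacbc_pow_cons_false, hg, Equiv.Perm.one_apply]

end Stmt9
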